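/- Let G be a symplectomorphism germ of (H_0^{m}, ν), with ν given by the operator J = −(∂/∂x)^{-1}, so that dG(u)* J dG(u) = J for all u near 0. If dG(u)* maps H_0^{-m} to itself boundedly, then dG(u)* maps H_0^{m+1} to itself boundedly, and by interpolation dG(u)* : H_0^s → H_0^s boundedly for every s ∈ [−m, m+1]. -/

import Mathlib

open scoped ENNReal NNReal ComplexConjugate

noncomputable section

/-- The `H_0^s` norm in Fourier coefficients `f : ℤ → ℂ` (zero-mean: `f 0 = 0`). -/
def Hc (s : ℝ) (f : ℤ → ℂ) : ℝ≥0∞ :=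
  (∑' k : ℤ, (k.natAbs : ℝ≥0∞) ^ (2 * s) * (‖f k‖₊ : ℝ≥0∞) ^ 2) ^ ((1 : ℝ) / 2)

/-- The operator `J = −(∂/∂x)⁻¹` in Fourier coefficients: `(J f)_k = −f_k/(ik)` for `k ≠ 0`. -/
def Jop (f : ℤ → ℂ) : ℤ → ℂ := fun k => if k = 0 then 0 else -(f k / (Complex.I * k))

/-- The real `L²` pairing `⟨f, g⟩ = Re Σ_k f_k conj g_k`. -/
def pairing (f g : ℤ → ℂ) : ℝ := (∑' k : ℤ, f k * conj (g k)).re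

/-!
The symplectic identity `A* J A = J` says `A* = J A⁻¹ J⁻¹`. Since `J⁻¹ = -∂/∂x` maps
`H_0^{m+1}` isometrically onto `H_0^m`, `A⁻¹` is bounded on `H_0^m` and `J` maps `H_0^m`
isometrically back onto `H_0^{m+1}`, the adjoint `A*` is bounded on `H_0^{m+1}`.

Boundedness on the intermediate spaces is interpolation between `H_0^{-m}` and `H_0^{m+1}`,
done by hand on dyadic frequency bands `2^i ≤ |k| < 2^(i+1)`: to estimate the band `i` of
`A* f`, split `f` at frequency `2^i`. The low part is measured in the higher norm and the
high part in the lower one; in both cases the loss is geometric in the distance between the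
bands, so summing over bands (a Schur test with geometric kernel) bounds the `H_0^s` norm.
-/

namespace SobolevScale

lemma pow_mul_inv_pow_of_le {r : ℝ≥0∞} (h0 : r ≠ 0) (htop : r ≠ ∞) {a b : ℕ} (hab : a ≤ b) :
    r ^ a * r⁻¹ ^ b = r⁻¹ ^ (b - a) := by
  obtain ⟨d, rfl⟩ := Nat.exists_eq_add_of_le hab
  rw [pow_add, Nat.add_sub_cancel_left, ← mul_assoc, ← mul_pow, ENNReal.mul_inv_cancel h0 htop,
    one_pow, one_mul]

lemma tsum_ite_lt_pow (ρ : ℝ≥0∞) (j : ℕ) :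
    ∑' i, (if j < i then ρ ^ (i - (j + 1)) else 0) = (1 - ρ)⁻¹ := by
  rw [← ENNReal.tsum_geometric, ← (add_left_injective (j + 1)).tsum_eq]
  · refine tsum_congr fun d => ?_
    rw [if_pos (by omega), Nat.add_sub_cancel]
  · intro i hi
    have hji : j < i := by
      by_contra h
      exact hi (if_neg h)
    exact ⟨i - (j + 1), by simp only; omega⟩

lemma tsum_ite_le_pow_le (ρ : ℝ≥0∞) (j : ℕ) :
    ∑' i, (if i ≤ j then ρ ^ (j - i) else 0) ≤ (1 - ρ)⁻¹ := by
  rw [tsum_eq_sum (s := Finset.range (j + 1)) fun i hi => if_neg (by simpa using hi),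
    ← ENNReal.tsum_geometric]
  calc ∑ i ∈ Finset.range (j + 1), (if i ≤ j then ρ ^ (j - i) else 0)
      = ∑ i ∈ Finset.range (j + 1), ρ ^ (j + 1 - 1 - i) :=
        Finset.sum_congr rfl fun i hi => by
          rw [if_pos (Nat.lt_succ_iff.1 (Finset.mem_range.1 hi)), Nat.add_sub_cancel]
    _ = ∑ d ∈ Finset.range (j + 1), ρ ^ d := Finset.sum_range_reflect (ρ ^ ·) (j + 1)
    _ ≤ _ := ENNReal.sum_le_tsum _

lemma tsum_tsum_mul_le_of_tsum_le {α β : Type*} {κ : α → β → ℝ≥0∞} {K : ℝ≥0∞}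
    (hκ : ∀ j, ∑' i, κ i j ≤ K) (b : β → ℝ≥0∞) :
    ∑' i, ∑' j, κ i j * b j ≤ K * ∑' j, b j := by
  rw [ENNReal.tsum_comm, ← ENNReal.tsum_mul_left]
  refine ENNReal.tsum_le_tsum fun j => ?_
  rw [ENNReal.tsum_mul_right]
  exact mul_le_mul_left (hκ j) _

def HcBounded (s : ℝ) (T : (ℤ → ℂ) → ℤ → ℂ) : Prop :=
  ∃ C : ℝ≥0∞, C < ∞ ∧ ∀ f, f 0 = 0 → Hc s (T f) ≤ C * Hc s f

def hcSq (s : ℝ) (f : ℤ → ℂ) : ℝ≥0∞ :=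
  ∑' k : ℤ, (k.natAbs : ℝ≥0∞) ^ (2 * s) * (‖f k‖₊ : ℝ≥0∞) ^ 2

lemma Hc_sq (s : ℝ) (f : ℤ → ℂ) : Hc s f ^ 2 = hcSq s f := by
  rw [Hc, ← ENNReal.rpow_natCast, ← ENNReal.rpow_mul]
  norm_num [hcSq]

lemma hcBounded_iff_hcSq {s : ℝ} {T : (ℤ → ℂ) → ℤ → ℂ} :
    HcBounded s T ↔ ∃ D : ℝ≥0∞, D < ∞ ∧ ∀ f, f 0 = 0 → hcSq s (T f) ≤ D * hcSq s f := by
  constructor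
  · rintro ⟨C, hC, hCT⟩
    refine ⟨C ^ 2, ENNReal.pow_lt_top hC, fun f hf => ?_⟩
    simpa only [← Hc_sq, mul_pow] using pow_le_pow_left' (hCT f hf) 2
  · rintro ⟨D, hD, hDT⟩
    refine ⟨D ^ (1 / 2 : ℝ), ENNReal.rpow_lt_top_of_nonneg (by norm_num) hD.ne, fun f hf => ?_⟩
    rw [Hc, Hc, ← ENNReal.mul_rpow_of_nonneg _ _ (by norm_num)]
    exact ENNReal.rpow_le_rpow (hDT f hf) (by norm_num)

/-- `-∂/∂x = J⁻¹` in Fourier coefficients. -/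
def negDeriv (g : ℤ → ℂ) : ℤ → ℂ := fun k => -(Complex.I * k) * g k

lemma negDeriv_apply_zero (g : ℤ → ℂ) : negDeriv g 0 = 0 := by
  simp [negDeriv]

lemma Jop_negDeriv {g : ℤ → ℂ} (hg : g 0 = 0) : Jop (negDeriv g) = g := by
  funext k
  by_cases hk : k = 0
  · simp [Jop, hk, hg]
  · simp only [Jop, negDeriv, if_neg hk]
    field_simp

lemma Hc_succ_Jop (s : ℝ) {h : ℤ → ℂ} (h0 : h 0 = 0) : Hc (s + 1) (Jop h) = Hc s h := by
  unfold Hc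
  congr 1
  refine tsum_congr fun k => ?_
  by_cases hk : k = 0
  · simp [Jop, hk, h0]
  have hn0 : (k.natAbs : ℝ≥0∞) ≠ 0 := by simpa using hk
  have hnt : (k.natAbs : ℝ≥0∞) ≠ ∞ := ENNReal.natCast_ne_top _
  have hJ : (‖Jop h k‖₊ : ℝ≥0∞) = ‖h k‖₊ / k.natAbs := by
    rw [Jop, if_neg hk, nnnorm_neg, nnnorm_div, nnnorm_mul, Complex.nnnorm_I, one_mul,
      Complex.nnnorm_intCast, ← NNReal.natCast_natAbs, ENNReal.coe_div (by simpa using hk)]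
    rfl
  rw [hJ, mul_add, mul_one, ENNReal.rpow_add _ _ hn0 hnt, ENNReal.rpow_two, div_eq_mul_inv,
    mul_pow, ← ENNReal.inv_pow, mul_assoc, mul_left_comm (_ ^ 2), ENNReal.mul_inv_cancel
      (pow_ne_zero 2 hn0) (ENNReal.pow_ne_top hnt), mul_one]

section Symplectic

variable {A Ainv Astar : (ℤ → ℂ) → ℤ → ℂ}
  (hAinv0 : ∀ f : ℤ → ℂ, f 0 = 0 → Ainv f 0 = 0)
  (hright : ∀ f : ℤ → ℂ, f 0 = 0 → A (Ainv f) = f)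
  (hsymp : ∀ f : ℤ → ℂ, f 0 = 0 → Astar (Jop (A f)) = Jop f)
include hAinv0 hright hsymp

lemma adjoint_eq_Jop_inv_negDeriv {g : ℤ → ℂ} (hg : g 0 = 0) :
    Astar g = Jop (Ainv (negDeriv g)) := by
  have h := hsymp (Ainv (negDeriv g)) (hAinv0 _ (negDeriv_apply_zero g))
  rwa [hright _ (negDeriv_apply_zero g), Jop_negDeriv hg] at h

lemma HcBounded.adjoint_succ {s : ℝ} (hAinv : HcBounded s Ainv) : HcBounded (s + 1) Astar := by
  obtain ⟨C, hC, hCinv⟩ := hAinv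
  refine ⟨C, hC, fun g hg => ?_⟩
  have hd := negDeriv_apply_zero g
  calc Hc (s + 1) (Astar g) = Hc s (Ainv (negDeriv g)) := by
        rw [adjoint_eq_Jop_inv_negDeriv hAinv0 hright hsymp hg, Hc_succ_Jop s (hAinv0 _ hd)]
    _ ≤ C * Hc s (negDeriv g) := hCinv _ hd
    _ = C * Hc (s + 1) g := by rw [← Hc_succ_Jop s hd, Jop_negDeriv hg]

end Symplectic

section Bands

def dyadicBand (i : ℕ) : Set ℤ := {k | k ≠ 0 ∧ Nat.log 2 k.natAbs = i}

def lowFreq (i : ℕ) : Set ℤ := {k | k.natAbs < 2 ^ i}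

variable {i j : ℕ} {k : ℤ}

lemma pow_le_natAbs_of_mem_dyadicBand (hk : k ∈ dyadicBand i) : 2 ^ i ≤ k.natAbs :=
  hk.2 ▸ Nat.pow_log_le_self 2 (Int.natAbs_ne_zero.2 hk.1)

lemma natAbs_lt_pow_of_mem_dyadicBand (hk : k ∈ dyadicBand i) : k.natAbs < 2 ^ (i + 1) :=
  hk.2 ▸ Nat.lt_pow_succ_log_self one_lt_two _

lemma mem_lowFreq_iff_of_mem_dyadicBand (hk : k ∈ dyadicBand j) : k ∈ lowFreq i ↔ j < i := by
  rw [← hk.2]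
  exact (Nat.log_lt_iff_lt_pow one_lt_two (Int.natAbs_ne_zero.2 hk.1)).symm

lemma dyadicBand_indicator_lowFreq (f : ℤ → ℂ) :
    (dyadicBand j).indicator ((lowFreq i).indicator f)
      = if j < i then (dyadicBand j).indicator f else 0 := by
  funext k
  by_cases hk : k ∈ dyadicBand j
  · have hlow := mem_lowFreq_iff_of_mem_dyadicBand (i := i) hk
    split_ifs with hji <;> simp [hk, hlow, hji]
  · split_ifs <;> simp [hk]

lemma dyadicBand_indicator_highFreq (f : ℤ → ℂ) :
    (dyadicBand j).indicator ((lowFreq i)ᶜ.indicator f)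
      = if i ≤ j then (dyadicBand j).indicator f else 0 := by
  funext k
  by_cases hk : k ∈ dyadicBand j
  · have hlow := mem_lowFreq_iff_of_mem_dyadicBand (i := i) hk
    split_ifs with hij <;> simp [hk, hlow, hij]
  · split_ifs <;> simp [hk]

end Bands

section HcSq

variable (t : ℝ)

lemma hcSq_zero : hcSq t 0 = 0 := by
  simp [hcSq]

lemma hcSq_indicator (S : Set ℤ) (g : ℤ → ℂ) :
    hcSq t (S.indicator g)
      = ∑' k, S.indicator (fun k => (k.natAbs : ℝ≥0∞) ^ (2 * t) * (‖g k‖₊ : ℝ≥0∞) ^ 2) k := by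
  refine tsum_congr fun k => ?_
  by_cases hk : k ∈ S <;> simp [hk]

lemma hcSq_indicator_le (S : Set ℤ) (g : ℤ → ℂ) : hcSq t (S.indicator g) ≤ hcSq t g := by
  rw [hcSq_indicator]
  exact ENNReal.tsum_le_tsum fun k => Set.indicator_le_self S _ k

lemma hcSq_add_le (f g : ℤ → ℂ) : hcSq t (f + g) ≤ 2 * (hcSq t f + hcSq t g) := by
  rw [hcSq, hcSq, hcSq, ← ENNReal.tsum_add, ← ENNReal.tsum_mul_left]
  refine ENNReal.tsum_le_tsum fun k => ?_
  have hnorm : (‖f k + g k‖₊ : ℝ≥0∞) ^ 2 ≤ 2 * ((‖f k‖₊ : ℝ≥0∞) ^ 2 + (‖g k‖₊ : ℝ≥0∞) ^ 2) := by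
    exact_mod_cast (pow_le_pow_left₀ zero_le (nnnorm_add_le _ _) 2).trans add_sq_le
  calc _ ≤ (k.natAbs : ℝ≥0∞) ^ (2 * t)
        * (2 * ((‖f k‖₊ : ℝ≥0∞) ^ 2 + (‖g k‖₊ : ℝ≥0∞) ^ 2)) := mul_le_mul_right hnorm _
    _ = _ := by ring

lemma hcSq_eq_tsum_dyadicBand {g : ℤ → ℂ} (hg : g 0 = 0) :
    hcSq t g = ∑' i, hcSq t ((dyadicBand i).indicator g) := by
  simp_rw [hcSq_indicator]
  rw [ENNReal.tsum_comm]
  refine tsum_congr fun k => ?_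
  by_cases hk : k = 0
  · simp [hk, hg, dyadicBand]
  rw [tsum_eq_single (Nat.log 2 k.natAbs) fun i hi => Set.indicator_of_notMem ?_ _,
    Set.indicator_of_mem (show k ∈ dyadicBand _ from ⟨hk, rfl⟩)]
  exact fun hmem => hi hmem.2.symm

lemma hcSq_lowFreq_indicator {f : ℤ → ℂ} (hf : f 0 = 0) (i : ℕ) :
    hcSq t ((lowFreq i).indicator f)
      = ∑' j, if j < i then hcSq t ((dyadicBand j).indicator f) else 0 := by
  rw [hcSq_eq_tsum_dyadicBand t (by simp [hf])]
  refine tsum_congr fun j => ?_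
  rw [dyadicBand_indicator_lowFreq, apply_ite (hcSq t), hcSq_zero]

lemma hcSq_highFreq_indicator {f : ℤ → ℂ} (hf : f 0 = 0) (i : ℕ) :
    hcSq t ((lowFreq i)ᶜ.indicator f)
      = ∑' j, if i ≤ j then hcSq t ((dyadicBand j).indicator f) else 0 := by
  rw [hcSq_eq_tsum_dyadicBand t (by simp [hf])]
  refine tsum_congr fun j => ?_
  rw [dyadicBand_indicator_highFreq, apply_ite (hcSq t), hcSq_zero]

end HcSq

/-- The factor by which the weight `|k|^(2c)` grows from one dyadic band to the next. -/
def octave (c : ℝ) : ℝ≥0∞ := 2 ^ (2 * c)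

lemma octave_ne_zero (c : ℝ) : octave c ≠ 0 := by
  simp [octave]

lemma octave_ne_top (c : ℝ) : octave c ≠ ∞ := by
  simp [octave]

lemma one_lt_octave {c : ℝ} (hc : 0 < c) : 1 < octave c :=
  ENNReal.one_lt_rpow (by norm_num) (by positivity)

lemma octave_pow_le_natAbs_rpow {c : ℝ} (hc : 0 ≤ c) {i : ℕ} {k : ℤ} (hk : k ∈ dyadicBand i) :
    octave c ^ i ≤ (k.natAbs : ℝ≥0∞) ^ (2 * c) := by
  rw [octave, ← ENNReal.rpow_mul_natCast, mul_comm (2 * c), ENNReal.rpow_natCast_mul]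
  exact ENNReal.rpow_le_rpow (by exact_mod_cast pow_le_natAbs_of_mem_dyadicBand hk) (by positivity)

lemma natAbs_rpow_le_octave_pow {c : ℝ} (hc : 0 ≤ c) {i : ℕ} {k : ℤ} (hk : k ∈ dyadicBand i) :
    (k.natAbs : ℝ≥0∞) ^ (2 * c) ≤ octave c ^ (i + 1) := by
  rw [octave, ← ENNReal.rpow_mul_natCast, mul_comm (2 * c), ENNReal.rpow_natCast_mul]
  exact ENNReal.rpow_le_rpow
    (by exact_mod_cast (natAbs_lt_pow_of_mem_dyadicBand hk).le) (by positivity)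

lemma natAbs_rpow_eq_mul {k : ℤ} (hk : k ≠ 0) (t t' : ℝ) :
    (k.natAbs : ℝ≥0∞) ^ (2 * t') = (k.natAbs : ℝ≥0∞) ^ (2 * (t' - t)) * k.natAbs ^ (2 * t) := by
  rw [← ENNReal.rpow_add _ _ (by simpa using hk) (ENNReal.natCast_ne_top _)]
  congr 1
  ring

lemma mul_hcSq_indicator_le_mul {S : Set ℤ} {t t' : ℝ} {a b : ℝ≥0∞}
    (h : ∀ k ∈ S, a * (k.natAbs : ℝ≥0∞) ^ (2 * t) ≤ b * (k.natAbs : ℝ≥0∞) ^ (2 * t'))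
    (g : ℤ → ℂ) : a * hcSq t (S.indicator g) ≤ b * hcSq t' (S.indicator g) := by
  rw [hcSq_indicator, hcSq_indicator, ← ENNReal.tsum_mul_left, ← ENNReal.tsum_mul_left]
  refine ENNReal.tsum_le_tsum fun k => ?_
  by_cases hk : k ∈ S
  · simp only [Set.indicator_of_mem hk, ← mul_assoc]
    exact mul_le_mul_left (h k hk) _
  · simp [hk]

lemma octave_pow_mul_hcSq_dyadicBand_le {t t' : ℝ} (htt' : t ≤ t') (i : ℕ) (g : ℤ → ℂ) :
    octave (t' - t) ^ i * hcSq t ((dyadicBand i).indicator g)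
      ≤ hcSq t' ((dyadicBand i).indicator g) := by
  simpa using mul_hcSq_indicator_le_mul (b := 1) (fun k hk => by
    rw [one_mul, natAbs_rpow_eq_mul hk.1 t t']
    exact mul_le_mul_left (octave_pow_le_natAbs_rpow (sub_nonneg.2 htt') hk) _) g

lemma hcSq_dyadicBand_le_octave_pow_mul {t t' : ℝ} (htt' : t ≤ t') (i : ℕ) (g : ℤ → ℂ) :
    hcSq t' ((dyadicBand i).indicator g)
      ≤ octave (t' - t) ^ (i + 1) * hcSq t ((dyadicBand i).indicator g) := by
  simpa using mul_hcSq_indicator_le_mul (a := 1) (fun k hk => by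
    rw [one_mul, natAbs_rpow_eq_mul hk.1 t t']
    exact mul_le_mul_left (natAbs_rpow_le_octave_pow (sub_nonneg.2 htt') hk) _) g

lemma inv_octave_pow_mul_le_iff {c : ℝ} {n : ℕ} {x y : ℝ≥0∞} :
    octave c ^ n * x ≤ y ↔ x ≤ (octave c)⁻¹ ^ n * y := by
  rw [← ENNReal.inv_pow, ENNReal.mul_le_iff_le_inv (pow_ne_zero _ (octave_ne_zero c))
    (ENNReal.pow_ne_top (octave_ne_top c))]

section BandEstimates

variable {T : (ℤ → ℂ) → ℤ → ℂ} {D : ℝ≥0∞} {f : ℤ → ℂ}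

lemma hcSq_dyadicBand_lowFreq_le {s q : ℝ} (hsq : s ≤ q)
    (hT : ∀ f, f 0 = 0 → hcSq q (T f) ≤ D * hcSq q f) (hf : f 0 = 0) (i : ℕ) :
    hcSq s ((dyadicBand i).indicator (T ((lowFreq i).indicator f)))
      ≤ D * ∑' j, (if j < i then (octave (q - s))⁻¹ ^ (i - (j + 1)) else 0)
          * hcSq s ((dyadicBand j).indicator f) := by
  set r := octave (q - s)
  have hlow0 : (lowFreq i).indicator f 0 = 0 := by simp [hf]
  calc hcSq s ((dyadicBand i).indicator (T ((lowFreq i).indicator f)))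
      ≤ r⁻¹ ^ i * hcSq q ((dyadicBand i).indicator (T ((lowFreq i).indicator f))) :=
        inv_octave_pow_mul_le_iff.1 (octave_pow_mul_hcSq_dyadicBand_le hsq i _)
    _ ≤ r⁻¹ ^ i * (D * hcSq q ((lowFreq i).indicator f)) :=
        mul_le_mul_right ((hcSq_indicator_le q _ _).trans (hT _ hlow0)) _
    _ = r⁻¹ ^ i * (D * ∑' j, if j < i then hcSq q ((dyadicBand j).indicator f) else 0) := by
        rw [hcSq_lowFreq_indicator q hf]
    _ ≤ r⁻¹ ^ i * (D * ∑' j,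
          if j < i then r ^ (j + 1) * hcSq s ((dyadicBand j).indicator f) else 0) := by
        gcongr with j
        split_ifs
        · exact hcSq_dyadicBand_le_octave_pow_mul hsq j f
        · rfl
    _ = _ := by
        rw [← ENNReal.tsum_mul_left, ← ENNReal.tsum_mul_left, ← ENNReal.tsum_mul_left]
        refine tsum_congr fun j => ?_
        split_ifs with hji
        · rw [← pow_mul_inv_pow_of_le (octave_ne_zero _) (octave_ne_top _)
            (show j + 1 ≤ i from hji)]
          ring
        · simp

lemma hcSq_dyadicBand_highFreq_le {p s : ℝ} (hps : p ≤ s)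
    (hT : ∀ f, f 0 = 0 → hcSq p (T f) ≤ D * hcSq p f) (hf : f 0 = 0) (i : ℕ) :
    hcSq s ((dyadicBand i).indicator (T ((lowFreq i)ᶜ.indicator f)))
      ≤ octave (s - p) * D * ∑' j, (if i ≤ j then (octave (s - p))⁻¹ ^ (j - i) else 0)
          * hcSq s ((dyadicBand j).indicator f) := by
  set r := octave (s - p)
  have hhigh0 : (lowFreq i)ᶜ.indicator f 0 = 0 := by simp [hf]
  calc hcSq s ((dyadicBand i).indicator (T ((lowFreq i)ᶜ.indicator f)))
      ≤ r ^ (i + 1) * hcSq p ((dyadicBand i).indicator (T ((lowFreq i)ᶜ.indicator f))) :=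
        hcSq_dyadicBand_le_octave_pow_mul hps i _
    _ ≤ r ^ (i + 1) * (D * hcSq p ((lowFreq i)ᶜ.indicator f)) :=
        mul_le_mul_right ((hcSq_indicator_le p _ _).trans (hT _ hhigh0)) _
    _ = r ^ (i + 1) * (D * ∑' j, if i ≤ j then hcSq p ((dyadicBand j).indicator f) else 0) := by
        rw [hcSq_highFreq_indicator p hf]
    _ ≤ r ^ (i + 1) * (D * ∑' j,
          if i ≤ j then r⁻¹ ^ j * hcSq s ((dyadicBand j).indicator f) else 0) := by
        gcongr with j
        split_ifs
        · exact inv_octave_pow_mul_le_iff.1 (octave_pow_mul_hcSq_dyadicBand_le hps j f)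
        · rfl
    _ = _ := by
        rw [← ENNReal.tsum_mul_left, ← ENNReal.tsum_mul_left, ← ENNReal.tsum_mul_left]
        refine tsum_congr fun j => ?_
        split_ifs with hij
        · rw [← pow_mul_inv_pow_of_le (octave_ne_zero _) (octave_ne_top _) hij]
          ring
        · simp

end BandEstimates

def interpolationConst (p s q : ℝ) (D₀ D₁ : ℝ≥0∞) : ℝ≥0∞ :=
  2 * (D₁ * (1 - (octave (q - s))⁻¹)⁻¹ + octave (s - p) * D₀ * (1 - (octave (s - p))⁻¹)⁻¹)

lemma inv_one_sub_inv_octave_ne_top {c : ℝ} (hc : 0 < c) : (1 - (octave c)⁻¹)⁻¹ ≠ ∞ := by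
  rw [Ne, ENNReal.inv_eq_top, tsub_eq_zero_iff_le, not_le, ENNReal.inv_lt_one]
  exact one_lt_octave hc

lemma interpolationConst_lt_top {p s q : ℝ} (hps : p < s) (hsq : s < q) {D₀ D₁ : ℝ≥0∞}
    (hD₀ : D₀ < ∞) (hD₁ : D₁ < ∞) : interpolationConst p s q D₀ D₁ < ∞ := by
  have h₀ := inv_one_sub_inv_octave_ne_top (sub_pos.2 hps)
  have h₁ := inv_one_sub_inv_octave_ne_top (sub_pos.2 hsq)
  have hr := octave_ne_top (s - p)
  unfold interpolationConst
  finiteness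

section Interpolation

variable {T : (ℤ → ℂ) → ℤ → ℂ} (hadd : ∀ f g, T (f + g) = T f + T g)
  (hT0 : ∀ f, f 0 = 0 → T f 0 = 0)
include hadd hT0

lemma hcSq_le_interpolationConst_mul {p s q : ℝ} (hps : p ≤ s) (hsq : s ≤ q) {D₀ D₁ : ℝ≥0∞}
    (hp : ∀ f, f 0 = 0 → hcSq p (T f) ≤ D₀ * hcSq p f)
    (hq : ∀ f, f 0 = 0 → hcSq q (T f) ≤ D₁ * hcSq q f) {f : ℤ → ℂ} (hf : f 0 = 0) :
    hcSq s (T f) ≤ interpolationConst p s q D₀ D₁ * hcSq s f := by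
  set b : ℕ → ℝ≥0∞ := fun j => hcSq s ((dyadicBand j).indicator f)
  set κlow : ℕ → ℕ → ℝ≥0∞ := fun i j => if j < i then (octave (q - s))⁻¹ ^ (i - (j + 1)) else 0
  set κhigh : ℕ → ℕ → ℝ≥0∞ := fun i j => if i ≤ j then (octave (s - p))⁻¹ ^ (j - i) else 0
  have hband : ∀ i, hcSq s ((dyadicBand i).indicator (T f)) ≤
      2 * (D₁ * ∑' j, κlow i j * b j + octave (s - p) * D₀ * ∑' j, κhigh i j * b j) := by
    intro i
    rw [← Set.indicator_self_add_compl (lowFreq i) f, hadd, Set.indicator_add']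
    refine (hcSq_add_le s _ _).trans ?_
    gcongr
    exacts [hcSq_dyadicBand_lowFreq_le hsq hq hf i, hcSq_dyadicBand_highFreq_le hps hp hf i]
  calc hcSq s (T f) = ∑' i, hcSq s ((dyadicBand i).indicator (T f)) :=
        hcSq_eq_tsum_dyadicBand s (hT0 f hf)
    _ ≤ ∑' i, 2 * (D₁ * ∑' j, κlow i j * b j + octave (s - p) * D₀ * ∑' j, κhigh i j * b j) :=
        ENNReal.tsum_le_tsum hband
    _ = 2 * (D₁ * ∑' i, ∑' j, κlow i j * b j
          + octave (s - p) * D₀ * ∑' i, ∑' j, κhigh i j * b j) := by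
        rw [ENNReal.tsum_mul_left, ENNReal.tsum_add, ENNReal.tsum_mul_left, ENNReal.tsum_mul_left]
    _ ≤ 2 * (D₁ * ((1 - (octave (q - s))⁻¹)⁻¹ * ∑' j, b j)
          + octave (s - p) * D₀ * ((1 - (octave (s - p))⁻¹)⁻¹ * ∑' j, b j)) := by
        gcongr
        exacts [tsum_tsum_mul_le_of_tsum_le (fun j => (tsum_ite_lt_pow _ j).le) b,
          tsum_tsum_mul_le_of_tsum_le (tsum_ite_le_pow_le _) b]
    _ = interpolationConst p s q D₀ D₁ * hcSq s f := by
        rw [hcSq_eq_tsum_dyadicBand s hf, interpolationConst]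
        ring

theorem HcBounded.interpolate {p s q : ℝ} (hps : p ≤ s) (hsq : s ≤ q) (hTp : HcBounded p T)
    (hTq : HcBounded q T) : HcBounded s T := by
  rcases hps.eq_or_lt with rfl | hps
  · exact hTp
  rcases hsq.eq_or_lt with rfl | hsq
  · exact hTq
  obtain ⟨D₀, hD₀, hp⟩ := hcBounded_iff_hcSq.1 hTp
  obtain ⟨D₁, hD₁, hq⟩ := hcBounded_iff_hcSq.1 hTq
  exact hcBounded_iff_hcSq.2 ⟨_, interpolationConst_lt_top hps hsq hD₀ hD₁,
    fun f hf => hcSq_le_interpolationConst_mul hadd hT0 hps.le hsq.le hp hq hf⟩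

end Interpolation

end SobolevScale

open SobolevScale in
theorem adjoint_bounded_on_scale_general (m : ℝ)
    (A Ainv Astar : (ℤ → ℂ) → ℤ → ℂ)
    (hAslin : IsLinearMap ℝ Astar)
    (hzero : ∀ f : ℤ → ℂ, f 0 = 0 → (A f) 0 = 0 ∧ (Ainv f) 0 = 0 ∧ (Astar f) 0 = 0)
    (hinv : ∀ f : ℤ → ℂ, f 0 = 0 → Ainv (A f) = f ∧ A (Ainv f) = f)
    (hsymp : ∀ f : ℤ → ℂ, f 0 = 0 → Astar (Jop (A f)) = Jop f)
    (hAinvbd : ∃ C : ℝ≥0∞, C < ∞ ∧ ∀ f, f 0 = 0 → Hc m (Ainv f) ≤ C * Hc m f)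
    (hneg : ∃ C : ℝ≥0∞, C < ∞ ∧ ∀ f, f 0 = 0 → Hc (-m) (Astar f) ≤ C * Hc (-m) f) :
    (∃ C : ℝ≥0∞, C < ∞ ∧ ∀ f, f 0 = 0 → Hc (m + 1) (Astar f) ≤ C * Hc (m + 1) f) ∧
    ∀ s : ℝ, -m ≤ s → s ≤ m + 1 →
      ∃ C : ℝ≥0∞, C < ∞ ∧ ∀ f, f 0 = 0 → Hc s (Astar f) ≤ C * Hc s f := by
  have hsucc : HcBounded (m + 1) Astar :=
    HcBounded.adjoint_succ (fun f hf => (hzero f hf).2.1) (fun f hf => (hinv f hf).2) hsymp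
      hAinvbd
  exact ⟨hsucc, fun s hs₁ hs₂ =>
    HcBounded.interpolate hAslin.map_add (fun f hf => (hzero f hf).2.2) hs₁ hs₂ hneg hsucc⟩

/-- Let `G` be a symplectomorphism germ of `(H_0^m, ν)`, `ν` given by
`J = −(∂/∂x)⁻¹`, so that `dG(u)* J dG(u) = J`.  Let `A = dG(u)` (bounded on `H_0^m` together
with its inverse) and let `A* = dG(u)*` be its adjoint for the `L²` pairing.  If `A*` maps
`H_0^{-m}` boundedly to itself, then `A*` maps `H_0^{m+1}` boundedly to itself, and by
interpolation `A* : H_0^s → H_0^s` boundedly for every `s ∈ [−m, m+1]`. -/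
theorem adjoint_bounded_on_scale (m : ℝ) (hm : 0 ≤ m)
    (A Ainv Astar : (ℤ → ℂ) → ℤ → ℂ)
    (hAlin : IsLinearMap ℝ A) (hAslin : IsLinearMap ℝ Astar)
    (hzero : ∀ f : ℤ → ℂ, f 0 = 0 → (A f) 0 = 0 ∧ (Ainv f) 0 = 0 ∧ (Astar f) 0 = 0)
    (hinv : ∀ f : ℤ → ℂ, f 0 = 0 → Ainv (A f) = f ∧ A (Ainv f) = f)
    (hadj : ∀ f g : ℤ → ℂ, f 0 = 0 → g 0 = 0 → pairing (A f) g = pairing f (Astar g))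
    (hsymp : ∀ f : ℤ → ℂ, f 0 = 0 → Astar (Jop (A f)) = Jop f)
    (hAbd : ∃ C : ℝ≥0∞, C < ∞ ∧ ∀ f, f 0 = 0 → Hc m (A f) ≤ C * Hc m f)
    (hAinvbd : ∃ C : ℝ≥0∞, C < ∞ ∧ ∀ f, f 0 = 0 → Hc m (Ainv f) ≤ C * Hc m f)
    (hneg : ∃ C : ℝ≥0∞, C < ∞ ∧ ∀ f, f 0 = 0 → Hc (-m) (Astar f) ≤ C * Hc (-m) f) :
    (∃ C : ℝ≥0∞, C < ∞ ∧ ∀ f, f 0 = 0 → Hc (m + 1) (Astar f) ≤ C * Hc (m + 1) f) ∧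
    ∀ s : ℝ, -m ≤ s → s ≤ m + 1 →
      ∃ C : ℝ≥0∞, C < ∞ ∧ ∀ f, f 0 = 0 → Hc s (Astar f) ≤ C * Hc s f :=
  adjoint_bounded_on_scale_general m A Ainv Astar hAslin hzero hinv hsymp hAinvbd hneg
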